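/- arXiv:1810.09275 — 2 statements merged into one kernel-verified Lean document; each statement's English description precedes it below -/
import Mathlib

section
/- Let I be a nonempty index set and let (Yᵢ, 𝓑ᵢ), i ∈ I, be ball spaces. The following are equivalent: (i) every (Yᵢ, 𝓑ᵢ), i ∈ I, satisfies S₄; (ii) the product ball space ∏ᵢ (Yᵢ, 𝓑ᵢ) satisfies S₄; (iii) the coproduct ball space ∐ᵢ (Yᵢ, 𝓑ᵢ) satisfies S₄. -/
open Set

/-- A ball space structure on `X`: a nonempty collection of nonempty subsets of `X`. -/
def IsBallSpace {X : Type*} (B : Set (Set X)) : Prop :=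
  B.Nonempty ∧ ∀ b ∈ B, b.Nonempty

/-- A nest of balls in `B`: a nonempty subfamily of `B` totally ordered by inclusion. -/
def IsNest {X : Type*} (B N : Set (Set X)) : Prop :=
  N.Nonempty ∧ N ⊆ B ∧ IsChain (· ⊆ ·) N

/-- S₄: the intersection of every nest of balls is itself a ball. -/
def S4 {X : Type*} (B : Set (Set X)) : Prop :=
  ∀ N, IsNest B N → ⋂₀ N ∈ B

/-- The balls of the product ball space: the sets `∏ᵢ bᵢ` such that for some `k`,
`bₖ ∈ Bₖ` and `bᵢ = Yᵢ` for all `i ≠ k`. -/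
def prodBalls {I : Type*} {Y : I → Type*} (B : ∀ i, Set (Set (Y i))) :
    Set (Set (∀ i, Y i)) :=
  { S | ∃ (b : ∀ i, Set (Y i)) (k : I), b k ∈ B k ∧ (∀ i, i ≠ k → b i = univ) ∧
      S = { x | ∀ i, x i ∈ b i } }

/-- The balls of the coproduct ball space on the disjoint union `Σ i, Y i`:
the sets `⋃ᵢ ιᵢ(bᵢ)` with `bᵢ ∈ Bᵢ` for every `i`. -/
def coprodBalls {I : Type*} {Y : I → Type*} (B : ∀ i, Set (Set (Y i))) :
    Set (Set (Σ i, Y i)) :=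
  { S | ∃ b : ∀ i, Set (Y i), (∀ i, b i ∈ B i) ∧ S = { p : Σ i, Y i | p.2 ∈ b p.1 } }

/-! A nest of product balls containing a proper cylinder `eval k ⁻¹' b₀` consists, below that
member, only of cylinders over the same factor `k`, because a cylinder over another factor
projects onto all of `Y k`; so its intersection is the cylinder over the intersection of a nest
in `B k`. Conversely, a nest in `B k` lifts to a nest of cylinders and its intersection is
recovered by projecting. Coproduct balls and their intersections are computed summand by
summand, and a nest in `B k` becomes a nest of coproduct balls by fixing one ball in every other
summand. -/

open Function

lemma IsBallSpace.nonempty {X : Type*} {B : Set (Set X)} (hB : IsBallSpace B) : Nonempty X :=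
  let ⟨b, hb⟩ := hB.1
  (hB.2 b hb).to_subtype.map Subtype.val

lemma IsNest.image {X Z : Type*} {B N : Set (Set X)} {B' : Set (Set Z)} {f : Set X → Set Z}
    (hN : IsNest B N) (hf : Monotone f) (hfB : MapsTo f B B') : IsNest B' (f '' N) :=
  ⟨hN.1.image f, (image_mono hN.2.1).trans hfB.image_subset,
    hN.2.2.image_of_map_rel _ _ f fun _ _ h => hf h⟩

section Product

variable {I : Type*} {Y : I → Type*} {B : ∀ i, Set (Set (Y i))}

lemma mem_prodBalls {S : Set (∀ i, Y i)} :
    S ∈ prodBalls B ↔ ∃ k, ∃ b ∈ B k, S = eval k ⁻¹' b := by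
  classical
  constructor
  · rintro ⟨b, k, hbk, hb, rfl⟩
    refine ⟨k, b k, hbk, ext fun x => ⟨fun h => h k, fun h i => ?_⟩⟩
    rcases eq_or_ne i k with rfl | hik
    · exact h
    · simp [hb i hik]
  · rintro ⟨k, b, hb, rfl⟩
    refine ⟨update (fun _ => univ) k b, k, by simpa using hb,
      fun i hik => update_of_ne hik _ _, ?_⟩
    rw [eval_preimage]
    ext
    simp

lemma preimage_eval_mem_prodBalls {k : I} {b : Set (Y k)} (hb : b ∈ B k) :
    eval k ⁻¹' b ∈ prodBalls B :=
  mem_prodBalls.2 ⟨k, b, hb, rfl⟩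

section NonemptyFactors

variable [∀ i, Nonempty (Y i)]

lemma image_eval_preimage_eval_of_ne {j k : I} (hjk : j ≠ k) {c : Set (Y j)}
    (hc : c.Nonempty) : eval k '' (eval j ⁻¹' c) = univ := by
  classical
  obtain ⟨y, hy⟩ := hc
  refine eq_univ_of_forall fun z =>
    ⟨update (update (fun i => Classical.arbitrary (Y i)) j y) k z, ?_, ?_⟩ <;> simp [hjk, hy]

lemma image_eval_preimage_eval (k : I) (b : Set (Y k)) : eval k '' (eval k ⁻¹' b) = b :=
  (surjective_eval k).image_preimage b

lemma exists_eq_preimage_eval_of_subset (hB : ∀ i, IsBallSpace (B i)) {S : Set (∀ i, Y i)}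
    (hS : S ∈ prodBalls B) {k : I} {b : Set (Y k)} (hb : b ≠ univ) (hSb : S ⊆ eval k ⁻¹' b) :
    ∃ c ∈ B k, S = eval k ⁻¹' c := by
  obtain ⟨j, c, hc, rfl⟩ := mem_prodBalls.1 hS
  rcases eq_or_ne j k with rfl | hjk
  · exact ⟨c, hc, rfl⟩
  · refine absurd (eq_univ_of_univ_subset ?_) hb
    rw [← image_eval_preimage_eval_of_ne hjk ((hB j).2 c hc), ← image_eval_preimage_eval k b]
    exact image_mono hSb

end NonemptyFactors

theorem S4_prodBalls (hB : ∀ i, IsBallSpace (B i)) (h : ∀ i, S4 (B i)) :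
    S4 (prodBalls B) := by
  have := fun i => (hB i).nonempty
  intro N hN
  by_cases hN_univ : ∀ S ∈ N, S = univ
  · obtain ⟨S, hS⟩ := hN.1
    rw [sInter_eq_univ.2 hN_univ, ← hN_univ S hS]
    exact hN.2.1 hS
  push Not at hN_univ
  obtain ⟨_, hS₀, hS₀_univ⟩ := hN_univ
  obtain ⟨k, b₀, hb₀, rfl⟩ := mem_prodBalls.1 (hN.2.1 hS₀)
  have hb₀_univ : b₀ ≠ univ := by rintro rfl; exact hS₀_univ preimage_univ
  set M := {c ∈ B k | eval k ⁻¹' c ∈ N}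
  have hM : IsNest (B k) M := by
    refine ⟨⟨b₀, hb₀, hS₀⟩, sep_subset _ _, fun c hc c' hc' _ => ?_⟩
    exact (hN.2.2.total hc.2 hc'.2).imp (surjective_eval k).preimage_subset_preimage_iff.1
      (surjective_eval k).preimage_subset_preimage_iff.1
  suffices ⋂₀ N = eval k ⁻¹' ⋂₀ M from this ▸ preimage_eval_mem_prodBalls (h k M hM)
  refine Subset.antisymm (fun x hx => ?_) fun x hx S hS => ?_
  · simp only [preimage_sInter, mem_iInter₂]
    exact fun c hc => hx _ hc.2
  · rcases hN.2.2.total hS₀ hS with hS₀S | hSS₀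
    · exact hS₀S (hx b₀ ⟨hb₀, hS₀⟩)
    · obtain ⟨c, hc, rfl⟩ :=
        exists_eq_preimage_eval_of_subset hB (hN.2.1 hS) hb₀_univ hSS₀
      exact hx c ⟨hc, hS⟩

theorem S4_of_S4_prodBalls (hB : ∀ i, IsBallSpace (B i)) (h : S4 (prodBalls B)) (k : I) :
    S4 (B k) := by
  have := fun i => (hB i).nonempty
  intro N hN
  have hN' : IsNest (prodBalls B) ((eval k ⁻¹' ·) '' N) :=
    hN.image (fun _ _ => preimage_mono) fun _ => preimage_eval_mem_prodBalls
  have hmem := h _ hN'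
  rw [sInter_image, ← preimage_iInter₂, ← sInter_eq_biInter] at hmem
  obtain ⟨j, c, hc, hNc⟩ := mem_prodBalls.1 hmem
  have hNc' : ⋂₀ N = eval k '' (eval j ⁻¹' c) := by rw [← hNc, image_eval_preimage_eval]
  rcases eq_or_ne j k with rfl | hjk
  · rwa [hNc', image_eval_preimage_eval]
  · obtain ⟨b, hb⟩ := hN.1
    have hN_univ : ⋂₀ N = univ := hNc'.trans (image_eval_preimage_eval_of_ne hjk ((hB j).2 c hc))
    rw [hN_univ, ← sInter_eq_univ.1 hN_univ b hb]
    exact hN.2.1 hb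

end Product

section Coproduct

variable {I : Type*} {Y : I → Type*} {B : ∀ i, Set (Set (Y i))}

lemma preimage_sigmaMk_mem {i : I} {S : Set (Σ i, Y i)} (hS : S ∈ coprodBalls B) :
    Sigma.mk i ⁻¹' S ∈ B i := by
  obtain ⟨b, hb, rfl⟩ := hS
  exact hb i

theorem S4_coprodBalls (h : ∀ i, S4 (B i)) : S4 (coprodBalls B) := by
  intro N hN
  have hN' (i : I) : IsNest (B i) ((Sigma.mk i ⁻¹' ·) '' N) :=
    hN.image (fun _ _ => preimage_mono) fun _ => preimage_sigmaMk_mem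
  refine ⟨fun i => ⋂₀ ((Sigma.mk i ⁻¹' ·) '' N), fun i => h i _ (hN' i), ?_⟩
  ext ⟨i, y⟩
  simp

theorem S4_of_S4_coprodBalls (hB : ∀ i, IsBallSpace (B i)) (h : S4 (coprodBalls B)) (k : I) :
    S4 (B k) := by
  classical
  choose d hd using fun i => (hB i).1
  let f (b : Set (Y k)) : Set (Σ i, Y i) := {p | p.2 ∈ update d k b p.1}
  have hf : Monotone f := fun _ _ h p hp => update_mono (f := d) h p.1 hp
  have hfB : MapsTo f (B k) (coprodBalls B) := fun b hb =>
    ⟨update d k b, fun i => by rcases eq_or_ne i k with rfl | hik <;> simp [*], rfl⟩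
  intro N hN
  have hNf : Sigma.mk k ⁻¹' ⋂₀ (f '' N) = ⋂₀ N := by
    ext
    simp [f]
  exact hNf ▸ preimage_sigmaMk_mem (h _ (hN.image hf hfB))

end Coproduct

theorem prod_coprod_S4_general {I : Type*} {Y : I → Type*}
    (B : ∀ i, Set (Set (Y i))) (hB : ∀ i, IsBallSpace (B i)) :
    ((∀ i, S4 (B i)) ↔ S4 (prodBalls B)) ∧
    ((∀ i, S4 (B i)) ↔ S4 (coprodBalls B)) :=
  ⟨⟨S4_prodBalls hB, S4_of_S4_prodBalls hB⟩, ⟨S4_coprodBalls, S4_of_S4_coprodBalls hB⟩⟩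

theorem prod_coprod_S4 {I : Type*} [Nonempty I] {Y : I → Type*}
    (B : ∀ i, Set (Set (Y i))) (hB : ∀ i, IsBallSpace (B i)) :
    ((∀ i, S4 (B i)) ↔ S4 (prodBalls B)) ∧
    ((∀ i, S4 (B i)) ↔ S4 (coprodBalls B)) :=
  prod_coprod_S4_general B hB
end

section
/- Let G be a linearly ordered abelian group. Assume that the order ball space of G (whose balls are all closed bounded intervals [a,b] with a ≤ b) is spherically complete, and that the ultrametric ball space of G (whose balls are all ultrametric balls B(a,c) = { x ∈ G : ∃ n ∈ ℕ, |x − a| ≤ n·|c| } with a, c ∈ G) is spherically complete. Let 𝓑 be the collection of all order-convex subsets of G that are nonempty unions of finitely many closed bounded intervals and ultrametric balls. Then (G, 𝓑) is spherically complete. (In fact, every such convex set is a bar-bell B(a,c) ∪ [a,b] ∪ B(b,d) with a ≤ b.) -/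
open Set

/-- Spherical completeness: every nest of balls has nonempty intersection. -/
def SphComplete {X : Type*} (B : Set (Set X)) : Prop :=
  ∀ N, IsNest B N → (⋂₀ N).Nonempty

/-- The ultrametric ball `B(a,c) = { x | ∃ n ∈ ℕ, |x − a| ≤ n·|c| }` of the natural
valuation of a linearly ordered abelian group. -/
def umBall {G : Type*} [AddCommGroup G] [LinearOrder G] [IsOrderedAddMonoid G] (a c : G) : Set G :=
  { x | ∃ n : ℕ, |x - a| ≤ n • |c| }

/-- The order ball space: all closed bounded intervals `[a,b]` with `a ≤ b`. -/
def orderBalls (G : Type*) [AddCommGroup G] [LinearOrder G] [IsOrderedAddMonoid G] : Set (Set G) :=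
  { S | ∃ a b : G, a ≤ b ∧ S = Icc a b }

/-- The ultrametric ball space: all ultrametric balls `B(a,c)`. -/
def umBalls (G : Type*) [AddCommGroup G] [LinearOrder G] [IsOrderedAddMonoid G] : Set (Set G) :=
  { S | ∃ a c : G, S = umBall a c }

/-- The bar-bells: sets of the form `B(a,c) ∪ [a,b] ∪ B(b,d)` with `a ≤ b`. -/
def barBells (G : Type*) [AddCommGroup G] [LinearOrder G] [IsOrderedAddMonoid G] : Set (Set G) :=
  { S | ∃ a b c d : G, a ≤ b ∧ S = umBall a c ∪ Icc a b ∪ umBall b d }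

/-- The order-convex subsets of `G` that are unions of finitely many (at least one)
closed bounded intervals and ultrametric balls. -/
def convexFinUnions (G : Type*) [AddCommGroup G] [LinearOrder G] [IsOrderedAddMonoid G] : Set (Set G) :=
  { S | (∀ x ∈ S, ∀ y ∈ S, ∀ z : G, x ≤ z → z ≤ y → z ∈ S) ∧
      ∃ F : Finset (Set G), F.Nonempty ∧ ↑F ⊆ orderBalls G ∪ umBalls G ∧
        S = ⋃₀ (↑F : Set (Set G)) }

/-!
Every set `T` of the family has an ultrametric ball at each end: a ball `B ⊆ T` containing all
points of `T` below (resp. above) some point of `T`. Given a nest `N`, let `L` (resp. `U`) be the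
points lying strictly below (resp. above) some member of `N`. If some member `T₀` misses `L`, the
lower end balls of the members inside `T₀` pairwise meet, hence form a nest of ultrametric balls,
and any common point lies in every member; symmetrically if some member misses `U`. Otherwise
every member meets both `L` and `U`. Enumerate a coinitial subfamily of `N` of minimal
cardinality `κ` by the initial ordinal of `κ`: fewer than `κ` points of `L` all lie below some
member, so a transfinite recursion chooses increasing `lᵢ ∈ L` and decreasing `uᵢ ∈ U` in the
`i`-th member, and a common point of the intervals `[lᵢ, uᵢ]` lies in every member.
The two end balls, recentred at the ends, also exhibit each set as a bar-bell.
-/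

open Cardinal

theorem exists_forall_rel_of_extend {ι β : Type*} [Preorder ι] [WellFoundedLT ι]
    (p : ι → β → Prop) (r : β → β → Prop)
    (extend : ∀ i (f : Iio i → β), (∀ j : Iio i, p j (f j)) → ∃ b, p i b ∧ ∀ j, r (f j) b) :
    ∃ g : ι → β, (∀ i, p i (g i)) ∧ ∀ j i, j < i → r (g j) (g i) := by
  let step : ∀ i, (∀ j < i, {b // p j b}) → {b // p i b} := fun i rec =>
    ⟨_, (extend i (fun j => (rec j j.2).1) (fun j => (rec j j.2).2)).choose_spec.1⟩
  let g : ∀ i, {b // p i b} := wellFounded_lt.fix step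
  have hg : ∀ j i, j < i → r (g j).1 (g i).1 := fun j i hji => by
    have hfix : g i = step i (fun j _ => g j) := wellFounded_lt.fix_eq step i
    rw [hfix]
    exact (extend i (fun j => (g j).1) (fun j => (g j).2)).choose_spec.2 ⟨j, hji⟩
  exact ⟨fun i => (g i).1, fun i => (g i).2, hg⟩

section EndBalls

variable {α : Type*} [LinearOrder α]

def HasLowerEndBall (𝓑 : Set (Set α)) (T : Set α) : Prop :=
  ∃ B ∈ 𝓑, ∃ a ∈ T, T ∩ Iic a ⊆ B ∧ B ⊆ T

/-- Definitionally `HasLowerEndBall 𝓑 T` in `αᵒᵈ`; all statements about upper ends are obtained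
by passing to the order dual. -/
def HasUpperEndBall (𝓑 : Set (Set α)) (T : Set α) : Prop :=
  ∃ B ∈ 𝓑, ∃ b ∈ T, T ∩ Ici b ⊆ B ∧ B ⊆ T

theorem Finset.exists_mem_forall_exists_le {F : Finset (Set α)} (hF : F.Nonempty) :
    ∃ P ∈ F, ∀ x ∈ ⋃₀ (F : Set (Set α)), ∃ y ∈ P, y ≤ x := by
  rcases isEmpty_or_nonempty α with hα | hα
  · obtain ⟨P, hP⟩ := hF
    exact ⟨P, hP, fun x => isEmptyElim x⟩
  by_contra! h
  choose! w hwF hw using h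
  obtain ⟨Q, hQF, hQ⟩ := F.exists_min_image w hF
  obtain ⟨R, hRF, hR⟩ := hwF Q hQF
  exact (hw R hRF _ hR).not_ge (hQ R hRF)

theorem HasLowerEndBall.sUnion {𝓑 : Set (Set α)} (hconv : ∀ B ∈ 𝓑, B.OrdConnected)
    {F : Finset (Set α)} (hF : F.Nonempty) (hP : ∀ P ∈ F, HasLowerEndBall 𝓑 P) :
    HasLowerEndBall 𝓑 (⋃₀ (F : Set (Set α))) := by
  obtain ⟨P, hPF, hP_low⟩ := F.exists_mem_forall_exists_le hF
  obtain ⟨B, hB, a, haP, hPB, hBP⟩ := hP P hPF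
  have hPS : P ⊆ ⋃₀ (F : Set (Set α)) := Set.subset_sUnion_of_mem hPF
  refine ⟨B, hB, a, hPS haP, fun x ⟨hx, hxa⟩ => ?_, hBP.trans hPS⟩
  obtain ⟨y, hyP, hyx⟩ := hP_low x hx
  exact (hconv B hB).out (hPB ⟨hyP, hyx.trans hxa⟩) (hPB ⟨haP, le_rfl⟩) ⟨hyx, hxa⟩

theorem HasUpperEndBall.sUnion {𝓑 : Set (Set α)} (hconv : ∀ B ∈ 𝓑, B.OrdConnected)
    {F : Finset (Set α)} (hF : F.Nonempty) (hP : ∀ P ∈ F, HasUpperEndBall 𝓑 P) :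
    HasUpperEndBall 𝓑 (⋃₀ (F : Set (Set α))) :=
  HasLowerEndBall.sUnion (α := αᵒᵈ) (fun B hB => (hconv B hB).dual) hF hP

end EndBalls

section NestOfConvexSets

variable {α : Type*} [LinearOrder α] {N : Set (Set α)}

theorem sInter_nonempty_of_hasLowerEndBall {𝓑 : Set (Set α)}
    (hcomp : ∀ B ∈ 𝓑, ∀ B' ∈ 𝓑, (B ∩ B').Nonempty → B ⊆ B' ∨ B' ⊆ B) (h𝓑 : SphComplete 𝓑)
    (hN : IsChain (· ⊆ ·) N) (hends : ∀ T ∈ N, HasLowerEndBall 𝓑 T)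
    {T₀ : Set α} (hT₀N : T₀ ∈ N) (hT₀ : ∀ x ∈ T₀, ∀ T ∈ N, ∃ t ∈ T, t ≤ x) :
    (⋂₀ N).Nonempty := by
  have : Nonempty α := by
    obtain ⟨-, -, a₀, -⟩ := hends T₀ hT₀N
    exact ⟨a₀⟩
  choose! B hB a haT hTB hBT using hends
  have hmeet : ∀ T ∈ N, ∀ T' ∈ N, T ⊆ T₀ → T' ⊆ T → (B T ∩ B T').Nonempty := by
    intro T hT T' hT' hTT₀ hT'T
    obtain ⟨t, htT', hta⟩ := hT₀ (a T) (hTT₀ (haT T hT)) T' hT'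
    have hmin : min t (a T') ∈ T' := min_rec' (· ∈ T') htT' (haT T' hT')
    exact ⟨min t (a T'), hTB T hT ⟨hT'T hmin, (min_le_left _ _).trans hta⟩,
      hTB T' hT' ⟨hmin, min_le_right _ _⟩⟩
  obtain ⟨z, hz⟩ := h𝓑 (B '' {T ∈ N | T ⊆ T₀}) <| by
    refine ⟨⟨B T₀, T₀, ⟨hT₀N, subset_rfl⟩, rfl⟩, ?_, ?_⟩
    · rintro _ ⟨T, ⟨hT, -⟩, rfl⟩
      exact hB T hT
    · rintro _ ⟨T, ⟨hT, hTT₀⟩, rfl⟩ _ ⟨T', ⟨hT', hT'T₀⟩, rfl⟩ -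
      rcases hN.total hT hT' with h | h
      · exact (hcomp _ (hB T' hT') _ (hB T hT) (hmeet T' hT' T hT hT'T₀ h)).symm
      · exact hcomp _ (hB T hT) _ (hB T' hT') (hmeet T hT T' hT' hTT₀ h)
  refine ⟨z, fun T hT => ?_⟩
  rcases hN.total hT hT₀N with h | h
  · exact hBT T hT (hz _ ⟨T, ⟨hT, h⟩, rfl⟩)
  · exact h (hBT T₀ hT₀N (hz _ ⟨T₀, ⟨hT₀N, subset_rfl⟩, rfl⟩))

theorem exists_mem_gt_of_mk_lt_cof (hN : IsChain (· ⊆ ·) N)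
    (hlow : ∀ T ∈ N, ∃ x ∈ T, ∃ T' ∈ N, ∀ t ∈ T', x < t)
    {A : Set α} (hA : ∀ a ∈ A, ∃ T' ∈ N, ∀ t ∈ T', a < t) (hcard : #A < Order.cof (↥N)ᵒᵈ)
    {T : Set α} (hT : T ∈ N) :
    ∃ l ∈ T, (∃ T' ∈ N, ∀ t ∈ T', l < t) ∧ ∀ a ∈ A, a < l := by
  choose f hfN hf using hA
  have hnot : ¬ IsCofinal (range fun a : A => OrderDual.toDual (⟨f a a.2, hfN a a.2⟩ : N)) :=
    fun hcof => (Order.cof_le hcof).trans mk_range_le |>.not_gt hcard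
  simp only [IsCofinal, mem_range, exists_exists_eq_and, not_forall, not_exists] at hnot
  obtain ⟨⟨T₁, hT₁N⟩, hT₁⟩ := hnot
  have hT₁f : ∀ a (ha : a ∈ A), T₁ ⊆ f a ha := fun a ha =>
    (hN.total hT₁N (hfN a ha)).resolve_right (hT₁ ⟨a, ha⟩)
  obtain ⟨T₂, hT₂N, hT₂T, hT₂T₁⟩ : ∃ T₂ ∈ N, T₂ ⊆ T ∧ T₂ ⊆ T₁ :=
    (hN.total hT hT₁N).elim (fun h => ⟨T, hT, subset_rfl, h⟩) fun h => ⟨T₁, hT₁N, h, subset_rfl⟩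
  obtain ⟨l, hlT₂, hlL⟩ := hlow T₂ hT₂N
  exact ⟨l, hT₂T hlT₂, hlL, fun a ha => hf a ha l (hT₁f a ha (hT₂T₁ hlT₂))⟩

theorem sInter_nonempty_of_forall_meets_below_above
    (hI : SphComplete {S : Set α | ∃ a b, a ≤ b ∧ S = Icc a b})
    (hNne : N.Nonempty) (hN : IsChain (· ⊆ ·) N) (hconv : ∀ T ∈ N, T.OrdConnected)
    (hlow : ∀ T ∈ N, ∃ x ∈ T, ∃ T' ∈ N, ∀ t ∈ T', x < t)
    (hup : ∀ T ∈ N, ∃ y ∈ T, ∃ T' ∈ N, ∀ t ∈ T', t < y) :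
    (⋂₀ N).Nonempty := by
  set L := {x | ∃ T' ∈ N, ∀ t ∈ T', x < t}
  set U := {y | ∃ T' ∈ N, ∀ t ∈ T', t < y}
  have hLU : ∀ l ∈ L, ∀ u ∈ U, l ≤ u := by
    rintro l ⟨T₁, hT₁, hl⟩ u ⟨T₂, hT₂, hu⟩
    rcases hN.total hT₁ hT₂ with h | h
    · obtain ⟨t, ht, -⟩ := hlow T₁ hT₁
      exact ((hl t ht).trans (hu t (h ht))).le
    · obtain ⟨t, ht, -⟩ := hlow T₂ hT₂
      exact ((hl t (h ht)).trans (hu t ht)).le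
  -- a coinitial subfamily of `N` of minimal cardinality, well-ordered by the initial ordinal
  set κ := Order.cof (↥N)ᵒᵈ
  obtain ⟨S, hS, hSκ⟩ := Order.exists_cof_eq (↥N)ᵒᵈ
  have : Nonempty N := hNne.to_subtype
  have : Nonempty κ.ord.ToType := nonempty_ord_toType Order.cof_ne_zero
  obtain ⟨e⟩ : Nonempty (κ.ord.ToType ≃ S) := Cardinal.eq.mp (by rw [mk_ord_toType, hSκ])
  let E : κ.ord.ToType → Set α := fun i => (OrderDual.ofDual (e i).1).1
  have hEN : ∀ i, E i ∈ N := fun i => (OrderDual.ofDual (e i).1).2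
  have hIio : ∀ i : κ.ord.ToType, #(Iio i) < κ := fun i => by simpa using mk_Iio_lt i
  obtain ⟨g, hgE, hg⟩ := exists_forall_rel_of_extend (β := α × α)
    (fun i p => p.1 ∈ E i ∩ L ∧ p.2 ∈ E i ∩ U) (fun p q => p.1 ≤ q.1 ∧ q.2 ≤ p.2) <| by
      intro i f hf
      obtain ⟨l, hlE, hlL, hl⟩ := exists_mem_gt_of_mk_lt_cof hN hlow
        (A := range fun j => (f j).1) (by rintro _ ⟨j, rfl⟩; exact (hf j).1.2)
        (mk_range_le.trans_lt (hIio i)) (hEN i)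
      obtain ⟨u, huE, huU, hu⟩ := exists_mem_gt_of_mk_lt_cof (α := αᵒᵈ) hN hup
        (A := range fun j => (f j).2) (by rintro _ ⟨j, rfl⟩; exact (hf j).2.2)
        (mk_range_le.trans_lt (hIio i)) (hEN i)
      exact ⟨(l, u), ⟨⟨hlE, hlL⟩, huE, huU⟩,
        fun j => ⟨(hl _ ⟨j, rfl⟩).le, (hu _ ⟨j, rfl⟩).le⟩⟩
  have hanti : Antitone fun i => Icc (g i).1 (g i).2 := fun j i hji =>
    hji.eq_or_lt.elim (fun h => h ▸ subset_rfl) fun h => Icc_subset_Icc (hg j i h).1 (hg j i h).2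
  obtain ⟨z, hz⟩ := hI _ ⟨range_nonempty _,
    (by rintro _ ⟨i, rfl⟩; exact ⟨_, _, hLU _ (hgE i).1.2 _ (hgE i).2.2, rfl⟩),
    hanti.isChain_range⟩
  refine ⟨z, fun T hT => ?_⟩
  obtain ⟨s, hsS, hsT⟩ := hS (OrderDual.toDual ⟨T, hT⟩)
  have hzE : z ∈ E (e.symm ⟨s, hsS⟩) :=
    (hconv _ (hEN _)).out (hgE _).1.1 (hgE _).2.1 (hz _ ⟨_, rfl⟩)
  simp only [E, Equiv.apply_symm_apply] at hzE
  exact hsT hzE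

end NestOfConvexSets

theorem SphComplete.of_hasEndBalls {α : Type*} [LinearOrder α] {𝓑 𝓒 : Set (Set α)}
    (hcomp : ∀ B ∈ 𝓑, ∀ B' ∈ 𝓑, (B ∩ B').Nonempty → B ⊆ B' ∨ B' ⊆ B) (h𝓑 : SphComplete 𝓑)
    (hI : SphComplete {S : Set α | ∃ a b, a ≤ b ∧ S = Icc a b})
    (hconv : ∀ T ∈ 𝓒, T.OrdConnected) (hlow : ∀ T ∈ 𝓒, HasLowerEndBall 𝓑 T)
    (hup : ∀ T ∈ 𝓒, HasUpperEndBall 𝓑 T) :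
    SphComplete 𝓒 := by
  rintro N ⟨hNne, hN𝓒, hN⟩
  by_cases hL : ∃ T₀ ∈ N, ∀ x ∈ T₀, ∀ T ∈ N, ∃ t ∈ T, t ≤ x
  · obtain ⟨T₀, hT₀N, hT₀⟩ := hL
    exact sInter_nonempty_of_hasLowerEndBall hcomp h𝓑 hN (fun T hT => hlow T (hN𝓒 hT)) hT₀N hT₀
  by_cases hU : ∃ T₀ ∈ N, ∀ x ∈ T₀, ∀ T ∈ N, ∃ t ∈ T, x ≤ t
  · obtain ⟨T₀, hT₀N, hT₀⟩ := hU
    exact sInter_nonempty_of_hasLowerEndBall (α := αᵒᵈ) hcomp h𝓑 hN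
      (fun T hT => hup T (hN𝓒 hT)) hT₀N hT₀
  push Not at hL hU
  exact sInter_nonempty_of_forall_meets_below_above hI hNne hN (fun T hT => hconv T (hN𝓒 hT))
    hL hU

section UltrametricBalls

variable {G : Type*} [AddCommGroup G] [LinearOrder G] [IsOrderedAddMonoid G]

theorem mem_umBall_self (a c : G) : a ∈ umBall a c :=
  ⟨0, by simp⟩

theorem umBall_zero (a : G) : umBall a 0 = {a} := by
  ext x
  simp [umBall, sub_eq_zero]

theorem umBall_ordConnected (a c : G) : (umBall a c).OrdConnected := by
  refine ⟨fun x ⟨n, hn⟩ y ⟨m, hm⟩ z ⟨hxz, hzy⟩ => ⟨n + m, abs_sub_le_iff.mpr ⟨?_, ?_⟩⟩⟩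
  · calc z - a ≤ |y - a| := (sub_le_sub_right hzy a).trans (le_abs_self _)
      _ ≤ m • |c| := hm
      _ ≤ (n + m) • |c| := nsmul_le_nsmul_left (abs_nonneg c) (by omega)
  · calc a - z ≤ |x - a| := (sub_le_sub_left hxz a).trans (neg_sub x a ▸ neg_le_abs _)
      _ ≤ n • |c| := hn
      _ ≤ (n + m) • |c| := nsmul_le_nsmul_left (abs_nonneg c) (by omega)

theorem umBall_subset_umBall {a b c d z : G} (hza : z ∈ umBall a c) (hzb : z ∈ umBall b d)
    (hcd : |c| ≤ |d|) : umBall a c ⊆ umBall b d := by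
  obtain ⟨m, hm⟩ := hza
  obtain ⟨p, hp⟩ := hzb
  rintro x ⟨n, hn⟩
  refine ⟨n + m + p, ?_⟩
  calc |x - b| ≤ |x - z| + |z - b| := abs_sub_le x z b
    _ ≤ |x - a| + |z - a| + |z - b| := by
        gcongr
        exact (abs_sub_le x a z).trans_eq (by rw [abs_sub_comm a z])
    _ ≤ n • |d| + m • |d| + p • |d| := by
        gcongr
        exacts [hn.trans (nsmul_le_nsmul_right hcd n), hm.trans (nsmul_le_nsmul_right hcd m)]
    _ = (n + m + p) • |d| := by rw [add_nsmul, add_nsmul]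

theorem umBall_eq_of_mem {a c x : G} (hx : x ∈ umBall a c) : umBall x c = umBall a c :=
  (umBall_subset_umBall (mem_umBall_self x c) hx le_rfl).antisymm
    (umBall_subset_umBall hx (mem_umBall_self x c) le_rfl)

theorem umBalls_total_of_inter_nonempty :
    ∀ B ∈ umBalls G, ∀ B' ∈ umBalls G, (B ∩ B').Nonempty → B ⊆ B' ∨ B' ⊆ B := by
  rintro _ ⟨a, c, rfl⟩ _ ⟨b, d, rfl⟩ ⟨z, hza, hzb⟩
  rcases le_total |c| |d| with hcd | hdc
  exacts [.inl (umBall_subset_umBall hza hzb hcd), .inr (umBall_subset_umBall hzb hza hdc)]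

end UltrametricBalls

section BarBells

variable {G : Type*} [AddCommGroup G] [LinearOrder G] [IsOrderedAddMonoid G] {S : Set G}

theorem hasLowerEndBall_of_mem_union {P : Set G} (hP : P ∈ orderBalls G ∪ umBalls G) :
    HasLowerEndBall (umBalls G) P := by
  rcases hP with ⟨a, b, hab, rfl⟩ | ⟨a, c, rfl⟩
  · refine ⟨umBall a 0, ⟨a, 0, rfl⟩, a, ⟨le_rfl, hab⟩, ?_, ?_⟩ <;> rw [umBall_zero]
    · exact fun x ⟨⟨hax, _⟩, hxa⟩ => le_antisymm hxa hax
    · exact singleton_subset_iff.mpr ⟨le_rfl, hab⟩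
  · exact ⟨umBall a c, ⟨a, c, rfl⟩, a, mem_umBall_self a c, inter_subset_left, subset_rfl⟩

theorem hasUpperEndBall_of_mem_union {P : Set G} (hP : P ∈ orderBalls G ∪ umBalls G) :
    HasUpperEndBall (umBalls G) P := by
  rcases hP with ⟨a, b, hab, rfl⟩ | ⟨a, c, rfl⟩
  · refine ⟨umBall b 0, ⟨b, 0, rfl⟩, b, ⟨hab, le_rfl⟩, ?_, ?_⟩ <;> rw [umBall_zero]
    · exact fun x ⟨⟨_, hxb⟩, hbx⟩ => le_antisymm hxb hbx
    · exact singleton_subset_iff.mpr ⟨hab, le_rfl⟩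
  · exact ⟨umBall a c, ⟨a, c, rfl⟩, a, mem_umBall_self a c, inter_subset_left, subset_rfl⟩

theorem umBalls_ordConnected : ∀ B ∈ umBalls G, B.OrdConnected := by
  rintro _ ⟨a, c, rfl⟩
  exact umBall_ordConnected a c

theorem ordConnected_of_mem_convexFinUnions (hS : S ∈ convexFinUnions G) : S.OrdConnected :=
  ⟨fun x hx y hy _ hz => hS.1 x hx y hy _ hz.1 hz.2⟩

theorem hasLowerEndBall_of_mem_convexFinUnions (hS : S ∈ convexFinUnions G) :
    HasLowerEndBall (umBalls G) S := by
  obtain ⟨-, F, hF, hFsub, rfl⟩ := hS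
  exact HasLowerEndBall.sUnion umBalls_ordConnected hF fun P hP =>
    hasLowerEndBall_of_mem_union (hFsub hP)

theorem hasUpperEndBall_of_mem_convexFinUnions (hS : S ∈ convexFinUnions G) :
    HasUpperEndBall (umBalls G) S := by
  obtain ⟨-, F, hF, hFsub, rfl⟩ := hS
  exact HasUpperEndBall.sUnion umBalls_ordConnected hF fun P hP =>
    hasUpperEndBall_of_mem_union (hFsub hP)

theorem mem_barBells_of_hasEndBalls (hS : S.OrdConnected) (hlow : HasLowerEndBall (umBalls G) S)
    (hup : HasUpperEndBall (umBalls G) S) : S ∈ barBells G := by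
  obtain ⟨_, ⟨a', c, rfl⟩, a, haS, hSa, haS'⟩ := hlow
  obtain ⟨_, ⟨b', d, rfl⟩, b, hbS, hSb, hbS'⟩ := hup
  have hmin : min a b ∈ S := min_rec' (· ∈ S) haS hbS
  have hmax : max a b ∈ S := max_rec' (· ∈ S) haS hbS
  have hl : umBall (min a b) c = umBall a' c := umBall_eq_of_mem (hSa ⟨hmin, min_le_left a b⟩)
  have hr : umBall (max a b) d = umBall b' d := umBall_eq_of_mem (hSb ⟨hmax, le_max_right a b⟩)
  refine ⟨min a b, max a b, c, d, min_le_max, ?_⟩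
  rw [hl, hr]
  refine subset_antisymm (fun x hx => ?_)
    (union_subset (union_subset haS' (hS.out hmin hmax)) hbS')
  by_cases hxa : x ≤ a
  · exact .inl (.inl (hSa ⟨hx, hxa⟩))
  by_cases hbx : b ≤ x
  · exact .inr (hSb ⟨hx, hbx⟩)
  push Not at hxa hbx
  exact .inl (.inr ⟨(min_le_left a b).trans hxa.le, hbx.le.trans (le_max_right a b)⟩)

end BarBells

theorem convexFinUnions_sphComplete {G : Type*} [AddCommGroup G] [LinearOrder G] [IsOrderedAddMonoid G]
    (ho : SphComplete (orderBalls G)) (hu : SphComplete (umBalls G)) :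
    SphComplete (convexFinUnions G) ∧ convexFinUnions G ⊆ barBells G :=
  ⟨SphComplete.of_hasEndBalls umBalls_total_of_inter_nonempty hu ho
      (fun _ => ordConnected_of_mem_convexFinUnions)
      (fun _ => hasLowerEndBall_of_mem_convexFinUnions)
      (fun _ => hasUpperEndBall_of_mem_convexFinUnions),
    fun _ hS => mem_barBells_of_hasEndBalls (ordConnected_of_mem_convexFinUnions hS)
      (hasLowerEndBall_of_mem_convexFinUnions hS) (hasUpperEndBall_of_mem_convexFinUnions hS)⟩
end
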